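/- arXiv:1309.4930 — 4 statements merged into one kernel-verified Lean document; each statement's English description precedes it below -/
import Mathlib

section
/- For any DMC W, the zero-undetected-error capacity is given by the multi-letter formula C_eo(W) = lim_{n→∞} (1/n) max_{P ∈ U_n} Σ_{y ∈ Y^n} (PW^n)(y) · log( 1 / P(X^n(y)) ), where U_n is the collection of PMFs on X^n that are uniform over their support; moreover the limit exists and equals the supremum over n of the same expression. -/
open scoped Classical
open Real Finset Filter

/-- The `n`-letter extension of the channel `W : X → Y → ℝ`. -/
noncomputable def Wn {X Y : Type*} (W : X → Y → ℝ) (n : ℕ)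
    (x : Fin n → X) (y : Fin n → Y) : ℝ :=
  ∏ j, W (x j) (y j)

/-- The probability of erasure given that message `m` was sent, when the codebook
`c` is used with a zero-undetected-error decoder. -/
noncomputable def erasureProb {X Y : Type*} [Fintype Y] (W : X → Y → ℝ) {n M : ℕ}
    (c : Fin M → Fin n → X) (m : Fin M) : ℝ :=
  ∑ y ∈ Finset.univ.filter (fun y : Fin n → Y =>
      1 < (Finset.univ.filter (fun m' : Fin M => 0 < Wn W n (c m') y)).card),
    Wn W n (c m) y

/-- The zero-undetected-error capacity of the channel `W : X → Y → ℝ`. -/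
noncomputable def Ceo {X Y : Type*} [Fintype Y] (W : X → Y → ℝ) : ℝ :=
  sSup (insert 0 {R : ℝ | 0 ≤ R ∧ ∀ δ : ℝ, 0 < δ →
    ∃ (n M : ℕ) (c : Fin M → Fin n → X), 1 ≤ n ∧
      Real.exp (n * R) ≤ (M : ℝ) ∧ ∀ m, erasureProb W c m < δ})

/-- The maximum, over PMFs `P` on `X^n` that are uniform over their support, of
`∑_y (PWⁿ)(y) log (1 / P(Xⁿ(y)))`, where `Xⁿ(y) = {x : Wⁿ(y|x) > 0}`. -/
noncomputable def forneyN {X Y : Type*} [Fintype X] [Fintype Y]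
    (W : X → Y → ℝ) (n : ℕ) : ℝ :=
  sSup {v : ℝ | ∃ P : (Fin n → X) → ℝ,
    (∀ x, 0 ≤ P x) ∧ (∑ x, P x = 1) ∧
    (∀ x, P x ≠ 0 →
      P x = 1 / ((Finset.univ.filter (fun x' : Fin n → X => P x' ≠ 0)).card : ℝ)) ∧
    v = ∑ y : Fin n → Y, (∑ x, P x * Wn W n x y) *
          Real.log (1 / ∑ x ∈ Finset.univ.filter (fun x : Fin n → X => 0 < Wn W n x y), P x)}

/-!
Converse: a code whose erasure probabilities are all below `δ < 1` has distinct codewords, and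
for the uniform distribution `P` on them, every output outside the erasure set that has positive
probability is compatible with exactly one codeword, so `log (1 / P(Xⁿ(y))) = log M` there; hence
`forneyN W n ≥ (1 - δ) log M`.

Achievability: take `P` uniform on a subset of `Xⁿ` with `∑_y (PWⁿ)(y) log (1 / P(Xⁿ(y))) > nρ`
and draw about `e^{knρ}` codewords independently from `P^k`. Given the output, a wrong codeword is
compatible with probability `P^k(X^{kn}(y))`, and by Chebyshev's inequality this is at most
`e^{-k(nρ + α)}`, for a fixed `α > 0`, except on a set of outputs of vanishing probability;
expurgating the worse half of a good codebook leaves a code with small maximal erasure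
probability.

Finally, products of uniform distributions make `forneyN` superadditive, so by Fekete's lemma
`forneyN W n / n` converges to its supremum.
-/

section

variable {A B : Type*}

/-! A one-shot channel is a kernel `K : A → B → ℝ`; `outputProb K P` is `PW` and
`compatibleProb K P b` is `P(X(b))` in the notation of the statement. -/

noncomputable def outputProb [Fintype A] (K : A → B → ℝ) (P : A → ℝ) (b : B) : ℝ :=
  ∑ a, P a * K a b

noncomputable def compatibleProb [Fintype A] (K : A → B → ℝ) (P : A → ℝ) (b : B) : ℝ :=
  ∑ a ∈ univ.filter (fun a => 0 < K a b), P a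

noncomputable def forneyValue [Fintype A] [Fintype B] (K : A → B → ℝ) (P : A → ℝ) : ℝ :=
  ∑ b, outputProb K P b * log (1 / compatibleProb K P b)

noncomputable def erasure [Fintype B] (K : A → B → ℝ) {M : ℕ} (c : Fin M → A)
    (m : Fin M) : ℝ :=
  ∑ b ∈ univ.filter (fun b => 1 < (univ.filter (fun m' => 0 < K (c m') b)).card), K (c m) b

def IsPMF [Fintype A] (P : A → ℝ) : Prop := (∀ a, 0 ≤ P a) ∧ ∑ a, P a = 1

section Basic

variable [Fintype A] {K : A → B → ℝ} {P : A → ℝ}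

lemma compatibleProb_eq_sum_ite (K : A → B → ℝ) (P : A → ℝ) (b : B) :
    compatibleProb K P b = ∑ a, if 0 < K a b then P a else 0 :=
  sum_filter _ _

lemma outputProb_nonneg (hK0 : ∀ a b, 0 ≤ K a b) (hP0 : ∀ a, 0 ≤ P a) (b : B) :
    0 ≤ outputProb K P b :=
  sum_nonneg fun a _ => mul_nonneg (hP0 a) (hK0 a b)

lemma sum_outputProb [Fintype B] (hK1 : ∀ a, ∑ b, K a b = 1) (P : A → ℝ) :
    ∑ b, outputProb K P b = ∑ a, P a := by
  simp only [outputProb]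
  rw [sum_comm]
  simp [← mul_sum, hK1]

lemma le_compatibleProb (hP0 : ∀ a, 0 ≤ P a) {a : A} {b : B} (hab : 0 < K a b) :
    P a ≤ compatibleProb K P b :=
  single_le_sum (fun a _ => hP0 a) (by simpa using hab)

lemma compatibleProb_le_one (hP : IsPMF P) (b : B) : compatibleProb K P b ≤ 1 :=
  hP.2 ▸ sum_le_sum_of_subset_of_nonneg (filter_subset _ _) fun a _ _ => hP.1 a

lemma exists_pos_of_outputProb_ne_zero (hK0 : ∀ a b, 0 ≤ K a b) {b : B}
    (h : outputProb K P b ≠ 0) : ∃ a, P a ≠ 0 ∧ 0 < K a b := by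
  obtain ⟨a, -, ha⟩ := exists_ne_zero_of_sum_ne_zero h
  exact ⟨a, left_ne_zero_of_mul ha, (hK0 a b).lt_of_ne' (right_ne_zero_of_mul ha)⟩

lemma compatibleProb_pos (hK0 : ∀ a b, 0 ≤ K a b) (hP0 : ∀ a, 0 ≤ P a) {b : B}
    (h : outputProb K P b ≠ 0) : 0 < compatibleProb K P b := by
  obtain ⟨a, hPa, hKa⟩ := exists_pos_of_outputProb_ne_zero hK0 h
  exact ((hP0 a).lt_of_ne' hPa).trans_le (le_compatibleProb hP0 hKa)

lemma outputProb_mul_log_nonneg (hK0 : ∀ a b, 0 ≤ K a b) (hP : IsPMF P) (b : B) :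
    0 ≤ outputProb K P b * log (1 / compatibleProb K P b) := by
  rcases eq_or_ne (outputProb K P b) 0 with h | h
  · simp [h]
  · refine mul_nonneg (outputProb_nonneg hK0 hP.1 b) (log_nonneg ?_)
    rw [one_div, one_le_inv₀ (compatibleProb_pos hK0 hP.1 h)]
    exact compatibleProb_le_one hP b

lemma forneyValue_nonneg [Fintype B] (hK0 : ∀ a b, 0 ≤ K a b) (hP : IsPMF P) :
    0 ≤ forneyValue K P :=
  sum_nonneg fun b _ => outputProb_mul_log_nonneg hK0 hP b

lemma sum_filter_outputProb_mul_compatibleProb_le [Fintype B] (hK0 : ∀ a b, 0 ≤ K a b)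
    (hK1 : ∀ a, ∑ b, K a b = 1) (hP : IsPMF P) {ε : ℝ} (hε : 0 ≤ ε) :
    ∑ b ∈ univ.filter (fun b => compatibleProb K P b ≤ ε),
      outputProb K P b * compatibleProb K P b ≤ ε := calc
  _ ≤ ∑ b, outputProb K P b * ε :=
      (sum_le_sum fun b hb => mul_le_mul_of_nonneg_left (mem_filter.1 hb).2
        (outputProb_nonneg hK0 hP.1 b)).trans <| sum_le_sum_of_subset_of_nonneg (subset_univ _)
          fun b _ _ => mul_nonneg (outputProb_nonneg hK0 hP.1 b) hε
  _ = ε := by rw [← sum_mul, sum_outputProb hK1, hP.2, one_mul]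

end Basic

section Uniform

noncomputable def uniformOn (S : Finset A) (a : A) : ℝ := if a ∈ S then (#S : ℝ)⁻¹ else 0

variable {S : Finset A}

lemma uniformOn_ne_zero_iff (hS : S.Nonempty) {a : A} : uniformOn S a ≠ 0 ↔ a ∈ S := by
  by_cases ha : a ∈ S <;> simp [uniformOn, ha, hS.ne_empty]

lemma isPMF_uniformOn [Fintype A] (hS : S.Nonempty) : IsPMF (uniformOn S) := by
  refine ⟨fun a => by unfold uniformOn; positivity, ?_⟩
  simp only [uniformOn, sum_ite_mem, univ_inter, sum_const, nsmul_eq_mul]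
  exact mul_inv_cancel₀ (by exact_mod_cast hS.card_pos.ne')

lemma uniform_pmf_iff_exists_eq_uniformOn [Fintype A] {P : A → ℝ} :
    ((∀ a, 0 ≤ P a) ∧ (∑ a, P a = 1) ∧
      ∀ a, P a ≠ 0 → P a = 1 / #(univ.filter (fun a' => P a' ≠ 0))) ↔
    ∃ S : Finset A, S.Nonempty ∧ P = uniformOn S := by
  constructor
  · rintro ⟨-, hP1, hPu⟩
    refine ⟨univ.filter (fun a => P a ≠ 0), ?_, funext fun a => ?_⟩
    · by_contra h
      simp_all [not_nonempty_iff_eq_empty, filter_eq_empty_iff]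
    · by_cases ha : P a = 0
      · simp [uniformOn, ha]
      · simp [uniformOn, hPu a ha]
  · rintro ⟨S, hS, rfl⟩
    have hsupp : univ.filter (fun a => uniformOn S a ≠ 0) = S := by
      ext a; simp [uniformOn_ne_zero_iff hS]
    refine ⟨(isPMF_uniformOn hS).1, (isPMF_uniformOn hS).2, fun a ha => ?_⟩
    rw [hsupp, uniformOn, if_pos ((uniformOn_ne_zero_iff hS).1 ha), one_div]

lemma uniformOn_map_apply {A' : Type*} (e : A ≃ A') (a : A) :
    uniformOn (S.map e.toEmbedding) (e a) = uniformOn S a := by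
  simp [uniformOn]

lemma uniformOn_product_apply {C : Type*} (T : Finset C) (p : A × C) :
    uniformOn (S ×ˢ T) p = uniformOn S p.1 * uniformOn T p.2 := by
  by_cases h1 : p.1 ∈ S <;> by_cases h2 : p.2 ∈ T <;> simp [uniformOn, h1, h2, mul_comm]

end Uniform

section Products

variable {C D : Type*} [Fintype A] [Fintype C]

def prodChannel (K₁ : A → B → ℝ) (K₂ : C → D → ℝ) : A × C → B × D → ℝ :=
  fun a b => K₁ a.1 b.1 * K₂ a.2 b.2

variable {K₁ : A → B → ℝ} {K₂ : C → D → ℝ} {P₁ : A → ℝ} {P₂ : C → ℝ}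

lemma outputProb_prodChannel (b : B) (d : D) :
    outputProb (prodChannel K₁ K₂) (fun a => P₁ a.1 * P₂ a.2) (b, d) =
      outputProb K₁ P₁ b * outputProb K₂ P₂ d := by
  simp only [outputProb, prodChannel, Fintype.sum_prod_type, Fintype.sum_mul_sum]
  exact sum_congr rfl fun a _ => sum_congr rfl fun c _ => by ring

lemma compatibleProb_prodChannel (hK₁ : ∀ a b, 0 ≤ K₁ a b) (hK₂ : ∀ c d, 0 ≤ K₂ c d)
    (b : B) (d : D) :
    compatibleProb (prodChannel K₁ K₂) (fun a => P₁ a.1 * P₂ a.2) (b, d) =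
      compatibleProb K₁ P₁ b * compatibleProb K₂ P₂ d := by
  simp only [compatibleProb_eq_sum_ite, Fintype.sum_prod_type, Fintype.sum_mul_sum]
  refine sum_congr rfl fun a _ => sum_congr rfl fun c _ => ?_
  have hpos : 0 < K₁ a b * K₂ c d ↔ 0 < K₁ a b ∧ 0 < K₂ c d := by
    simp only [(mul_nonneg (hK₁ a b) (hK₂ c d)).lt_iff_ne', (hK₁ a b).lt_iff_ne',
      (hK₂ c d).lt_iff_ne', ne_eq, mul_eq_zero, not_or]
  simp only [prodChannel, hpos]
  split_ifs <;> simp_all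

lemma forneyValue_prodChannel [Fintype B] [Fintype D] (hK₁ : ∀ a b, 0 ≤ K₁ a b)
    (hK₂ : ∀ c d, 0 ≤ K₂ c d) (hK₁1 : ∀ a, ∑ b, K₁ a b = 1) (hK₂1 : ∀ c, ∑ d, K₂ c d = 1)
    (hP₁ : IsPMF P₁) (hP₂ : IsPMF P₂) :
    forneyValue (prodChannel K₁ K₂) (fun a => P₁ a.1 * P₂ a.2) =
      forneyValue K₁ P₁ + forneyValue K₂ P₂ := by
  have hterm : ∀ b d, outputProb K₁ P₁ b * outputProb K₂ P₂ d *
      log (1 / (compatibleProb K₁ P₁ b * compatibleProb K₂ P₂ d)) =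
      outputProb K₂ P₂ d * (outputProb K₁ P₁ b * log (1 / compatibleProb K₁ P₁ b)) +
      outputProb K₁ P₁ b * (outputProb K₂ P₂ d * log (1 / compatibleProb K₂ P₂ d)) := by
    intro b d
    rcases eq_or_ne (outputProb K₁ P₁ b) 0 with h₁ | h₁
    · simp [h₁]
    rcases eq_or_ne (outputProb K₂ P₂ d) 0 with h₂ | h₂
    · simp [h₂]
    rw [← one_div_mul_one_div, log_mul
      (one_div_ne_zero (compatibleProb_pos hK₁ hP₁.1 h₁).ne')
      (one_div_ne_zero (compatibleProb_pos hK₂ hP₂.1 h₂).ne')]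
    ring
  simp only [forneyValue, Fintype.sum_prod_type, outputProb_prodChannel,
    compatibleProb_prodChannel hK₁ hK₂, hterm, sum_add_distrib, ← mul_sum, ← sum_mul,
    sum_outputProb hK₁1, sum_outputProb hK₂1, hP₁.2, hP₂.2, one_mul]

end Products

section Relabeling

variable {A' B' : Type*} [Fintype B] [Fintype B'] {K : A → B → ℝ} {K' : A' → B' → ℝ}
  (eA : A ≃ A') (eB : B ≃ B')

lemma forneyValue_comp_equiv [Fintype A] [Fintype A'] (h : ∀ a b, K' (eA a) (eB b) = K a b)
    (P' : A' → ℝ) :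
    forneyValue K' P' = forneyValue K (P' ∘ eA) := by
  have hout : ∀ b, outputProb K' P' (eB b) = outputProb K (P' ∘ eA) b := fun b => by
    simp only [outputProb, ← eA.sum_comp, Function.comp, h]
  have hcomp : ∀ b, compatibleProb K' P' (eB b) = compatibleProb K (P' ∘ eA) b := fun b => by
    simp only [compatibleProb_eq_sum_ite, ← eA.sum_comp, Function.comp, h]
  simp only [forneyValue, ← eB.sum_comp, hout, hcomp]

lemma erasure_comp_equiv (h : ∀ a b, K' (eA a) (eB b) = K a b) {M : ℕ} (c : Fin M → A)
    (m : Fin M) : erasure K' (eA ∘ c) m = erasure K c m := by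
  simp only [erasure, sum_filter, ← eB.sum_comp, Function.comp, h]

end Relabeling

section Blocks

variable [Fintype A] {K : A → B → ℝ} {P : A → ℝ}

lemma outputProb_Wn (k : ℕ) (y : Fin k → B) :
    outputProb (Wn K k) (fun x => ∏ i, P (x i)) y = ∏ i, outputProb K P (y i) := by
  simp only [outputProb, Wn, ← prod_mul_distrib, Fintype.prod_sum]

lemma compatibleProb_Wn (hK : ∀ a b, 0 ≤ K a b) (k : ℕ) (y : Fin k → B) :
    compatibleProb (Wn K k) (fun x => ∏ i, P (x i)) y = ∏ i, compatibleProb K P (y i) := by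
  have hpos : ∀ x : Fin k → A, 0 < Wn K k x y ↔ ∀ i, 0 < K (x i) (y i) := fun x => by
    simp only [Wn, (prod_nonneg fun i _ => hK _ _).lt_iff_ne', (hK _ _).lt_iff_ne', ne_eq,
      prod_eq_zero_iff, mem_univ, true_and, not_exists]
  simp only [compatibleProb_eq_sum_ite, Fintype.prod_sum, hpos, Fintype.prod_ite_zero]
  congr! 2

lemma compatibleProb_Wn_eq_exp (hK0 : ∀ a b, 0 ≤ K a b) (hP0 : ∀ a, 0 ≤ P a) {k : ℕ}
    {y : Fin k → B} (hy : ∏ i, outputProb K P (y i) ≠ 0) :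
    compatibleProb (Wn K k) (fun x => ∏ i, P (x i)) y =
      exp (-∑ i, log (1 / compatibleProb K P (y i))) := by
  rw [compatibleProb_Wn hK0, ← sum_neg_distrib, exp_sum]
  refine prod_congr rfl fun i _ => ?_
  rw [one_div, log_inv, neg_neg,
    exp_log (compatibleProb_pos hK0 hP0 (prod_ne_zero_iff.1 hy i (mem_univ i)))]

end Blocks

section ForneyMax

variable [Fintype A] [Fintype B] {K : A → B → ℝ}

lemma forneyValue_le_log_inv (hK0 : ∀ a b, 0 ≤ K a b) (hK1 : ∀ a, ∑ b, K a b = 1)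
    {P : A → ℝ} (hP : IsPMF P) {c : ℝ} (hc : 0 < c) (hPc : ∀ a, P a ≠ 0 → c ≤ P a) :
    forneyValue K P ≤ log c⁻¹ := by
  calc forneyValue K P ≤ ∑ b, outputProb K P b * log c⁻¹ := sum_le_sum fun b _ => ?_
    _ = log c⁻¹ := by rw [← sum_mul, sum_outputProb hK1, hP.2, one_mul]
  rcases eq_or_ne (outputProb K P b) 0 with h | h
  · simp [h]
  obtain ⟨a, hPa, hKa⟩ := exists_pos_of_outputProb_ne_zero hK0 h
  refine mul_le_mul_of_nonneg_left ?_ (outputProb_nonneg hK0 hP.1 b)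
  rw [one_div]
  exact log_le_log (inv_pos.2 (compatibleProb_pos hK0 hP.1 h))
    (inv_anti₀ hc ((hPc a hPa).trans (le_compatibleProb hP.1 hKa)))

lemma forneyValue_uniformOn_le_log_card (hK0 : ∀ a b, 0 ≤ K a b)
    (hK1 : ∀ a, ∑ b, K a b = 1) {S : Finset A} (hS : S.Nonempty) :
    forneyValue K (uniformOn S) ≤ log #S := by
  simpa using forneyValue_le_log_inv hK0 hK1 (isPMF_uniformOn hS) (c := (#S : ℝ)⁻¹)
    (by simpa using hS.card_pos) fun a ha => by simp [uniformOn, (uniformOn_ne_zero_iff hS).1 ha]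

/-- `max_{P ∈ U} ∑_b (PK)(b) log (1 / P(X(b)))`, a maximum over the finitely many supports. -/
noncomputable def forneyMax (K : A → B → ℝ) : ℝ :=
  ⨆ S : {S : Finset A // S.Nonempty}, forneyValue K (uniformOn S.1)

lemma forneyValue_le_forneyMax (K : A → B → ℝ) {S : Finset A} (hS : S.Nonempty) :
    forneyValue K (uniformOn S) ≤ forneyMax K :=
  le_ciSup (f := fun S : {S : Finset A // S.Nonempty} => forneyValue K (uniformOn S.1))
    (Finite.bddAbove_range _) ⟨S, hS⟩

lemma forneyMax_nonneg (hK0 : ∀ a b, 0 ≤ K a b) : 0 ≤ forneyMax K :=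
  Real.iSup_nonneg fun S => forneyValue_nonneg hK0 (isPMF_uniformOn S.2)

lemma forneyMax_le_log_card (hK0 : ∀ a b, 0 ≤ K a b) (hK1 : ∀ a, ∑ b, K a b = 1) :
    forneyMax K ≤ log (Fintype.card A) :=
  Real.iSup_le (fun S => (forneyValue_uniformOn_le_log_card hK0 hK1 S.2).trans <|
    log_le_log (by simpa using S.2.card_pos) (by exact_mod_cast card_le_univ S.1))
    (log_natCast_nonneg _)

lemma exists_lt_forneyValue_of_lt_forneyMax {ρ : ℝ} (hρ : 0 ≤ ρ) (h : ρ < forneyMax K) :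
    ∃ S : Finset A, S.Nonempty ∧ ρ < forneyValue K (uniformOn S) := by
  by_contra! hle
  exact h.not_ge (Real.iSup_le (fun S => hle S.1 S.2) hρ)

lemma forneyMax_le_of_equiv {A' B' : Type*} [Fintype A'] [Fintype B'] {K' : A' → B' → ℝ}
    (eA : A ≃ A') (eB : B ≃ B') (h : ∀ a b, K' (eA a) (eB b) = K a b)
    (hK0' : ∀ a b, 0 ≤ K' a b) : forneyMax K ≤ forneyMax K' := by
  refine Real.iSup_le (fun S => ?_) (forneyMax_nonneg hK0')
  have hcomp : uniformOn (S.1.map eA.toEmbedding) ∘ eA = uniformOn S.1 :=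
    funext (uniformOn_map_apply eA)
  rw [← hcomp, ← forneyValue_comp_equiv eA eB h]
  exact forneyValue_le_forneyMax K' (S.2.map)

lemma add_forneyMax_le_prodChannel {C D : Type*} [Fintype C] [Fintype D] [Nonempty A]
    [Nonempty C] {K₂ : C → D → ℝ} (hK0 : ∀ a b, 0 ≤ K a b) (hK₂0 : ∀ c d, 0 ≤ K₂ c d)
    (hK1 : ∀ a, ∑ b, K a b = 1) (hK₂1 : ∀ c, ∑ d, K₂ c d = 1) :
    forneyMax K + forneyMax K₂ ≤ forneyMax (prodChannel K K₂) := by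
  have : Nonempty {S : Finset A // S.Nonempty} := ⟨⟨univ, univ_nonempty⟩⟩
  have : Nonempty {T : Finset C // T.Nonempty} := ⟨⟨univ, univ_nonempty⟩⟩
  refine ciSup_add_ciSup_le fun S T => ?_
  rw [← forneyValue_prodChannel hK0 hK₂0 hK1 hK₂1 (isPMF_uniformOn S.2) (isPMF_uniformOn T.2),
    ← funext (uniformOn_product_apply T.1)]
  exact forneyValue_le_forneyMax _ (S.2.product T.2)

end ForneyMax

section Extensions

variable {X Y : Type*} {W : X → Y → ℝ}

lemma Wn_nonneg (hW0 : ∀ x y, 0 ≤ W x y) (n : ℕ) (x : Fin n → X) (y : Fin n → Y) :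
    0 ≤ Wn W n x y :=
  prod_nonneg fun _ _ => hW0 _ _

lemma sum_Wn [Fintype Y] (hW1 : ∀ x, ∑ y, W x y = 1) (n : ℕ) (x : Fin n → X) :
    ∑ y, Wn W n x y = 1 := by
  simp [Wn, ← Fintype.prod_sum, hW1]

lemma Wn_append (a b : ℕ) (x₁ : Fin a → X) (x₂ : Fin b → X) (y₁ : Fin a → Y) (y₂ : Fin b → Y) :
    Wn W (a + b) (Fin.append x₁ x₂) (Fin.append y₁ y₂) = Wn W a x₁ y₁ * Wn W b x₂ y₂ := by
  simp [Wn, Fin.prod_univ_add]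

def blockEquiv (X : Type*) (k n : ℕ) : (Fin k → Fin n → X) ≃ (Fin (k * n) → X) :=
  (Equiv.curry _ _ _).symm.trans (finProdFinEquiv.arrowCongr (Equiv.refl X))

lemma Wn_blockEquiv (k n : ℕ) (x : Fin k → Fin n → X) (y : Fin k → Fin n → Y) :
    Wn W (k * n) (blockEquiv X k n x) (blockEquiv Y k n y) = Wn (Wn W n) k x y := by
  rw [Wn, ← finProdFinEquiv.prod_comp, Fintype.prod_prod_type]
  simp [blockEquiv, Wn]

lemma erasureProb_eq_erasure [Fintype Y] {n M : ℕ} (c : Fin M → Fin n → X) (m : Fin M) :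
    erasureProb W c m = erasure (Wn W n) c m :=
  rfl

variable [Fintype X] [Fintype Y]

lemma forneyN_eq_forneyMax (W : X → Y → ℝ) (n : ℕ) : forneyN W n = forneyMax (Wn W n) := by
  unfold forneyN forneyMax
  rw [iSup]
  congr 1
  ext v
  simp only [Set.mem_ofPred_eq, Set.mem_range, Subtype.exists]
  constructor
  · rintro ⟨P, hP0, hP1, hPu, rfl⟩
    obtain ⟨S, hS, rfl⟩ := uniform_pmf_iff_exists_eq_uniformOn.1 ⟨hP0, hP1, hPu⟩
    exact ⟨S, hS, rfl⟩
  · rintro ⟨S, hS, rfl⟩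
    obtain ⟨hP0, hP1, hPu⟩ := uniform_pmf_iff_exists_eq_uniformOn.2 ⟨S, hS, rfl⟩
    exact ⟨uniformOn S, hP0, hP1, hPu, rfl⟩

lemma forneyN_nonneg (hW0 : ∀ x y, 0 ≤ W x y) (n : ℕ) : 0 ≤ forneyN W n :=
  forneyN_eq_forneyMax W n ▸ forneyMax_nonneg (Wn_nonneg hW0 n)

lemma forneyN_le (hW0 : ∀ x y, 0 ≤ W x y) (hW1 : ∀ x, ∑ y, W x y = 1) (n : ℕ) :
    forneyN W n ≤ n * log (Fintype.card X) := by
  simpa [forneyN_eq_forneyMax, Fintype.card_fun, log_pow] using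
    forneyMax_le_log_card (Wn_nonneg hW0 n) (sum_Wn hW1 n)

lemma forneyN_add_le [Nonempty X] (hW0 : ∀ x y, 0 ≤ W x y) (hW1 : ∀ x, ∑ y, W x y = 1)
    (a b : ℕ) : forneyN W a + forneyN W b ≤ forneyN W (a + b) := by
  simp only [forneyN_eq_forneyMax]
  exact (add_forneyMax_le_prodChannel (Wn_nonneg hW0 a) (Wn_nonneg hW0 b) (sum_Wn hW1 a)
    (sum_Wn hW1 b)).trans <| forneyMax_le_of_equiv (Fin.appendEquiv a b) (Fin.appendEquiv a b)
      (fun p q => Wn_append a b p.1 p.2 q.1 q.2) (Wn_nonneg hW0 (a + b))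

end Extensions

section Converse

variable {K : A → B → ℝ} {M : ℕ} {c : Fin M → A}

lemma erasure_eq_one_of_eq [Fintype B] (hK0 : ∀ a b, 0 ≤ K a b) (hK1 : ∀ a, ∑ b, K a b = 1)
    {m m' : Fin M} (hne : m ≠ m') (heq : c m = c m') : erasure K c m = 1 := by
  rw [erasure, sum_filter_of_ne, hK1]
  intro b _ hb
  have hpos : 0 < K (c m) b := (hK0 _ _).lt_of_ne' hb
  exact one_lt_card.2 ⟨m, by simpa using hpos, m', by simpa [← heq] using hpos, hne⟩

lemma injective_of_erasure_lt_one [Fintype B] (hK0 : ∀ a b, 0 ≤ K a b)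
    (hK1 : ∀ a, ∑ b, K a b = 1) (h : ∀ m, erasure K c m < 1) : Function.Injective c :=
  fun m _ heq => by_contra fun hne => (h m).ne (erasure_eq_one_of_eq hK0 hK1 hne heq)

variable [Fintype A] [DecidableEq A]

lemma sum_uniformOn_image_mul (hc : Function.Injective c) (f : A → ℝ) :
    ∑ a, uniformOn (univ.image c) a * f a = (∑ m, f (c m)) / M := by
  simp only [uniformOn, ite_mul, zero_mul, sum_ite_mem, univ_inter, card_image_of_injective _ hc,
    sum_image fun _ _ _ _ h => hc h, card_univ, Fintype.card_fin, ← mul_sum]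
  ring

lemma compatibleProb_uniformOn_image (hc : Function.Injective c) (b : B) :
    compatibleProb K (uniformOn (univ.image c)) b = #(univ.filter fun m => 0 < K (c m) b) / M := by
  have h := sum_uniformOn_image_mul hc fun a => if 0 < K a b then (1 : ℝ) else 0
  simp only [mul_ite, mul_one, mul_zero] at h
  rw [compatibleProb_eq_sum_ite, h, sum_boole]

lemma one_sub_mean_erasure_mul_log_le [Fintype B] (hK0 : ∀ a b, 0 ≤ K a b)
    (hK1 : ∀ a, ∑ b, K a b = 1) (hM : 0 < M) (hc : Function.Injective c) :
    (1 - (∑ m, erasure K c m) / M) * log M ≤ forneyValue K (uniformOn (univ.image c)) := by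
  set P := uniformOn (univ.image c)
  have hP : IsPMF P := isPMF_uniformOn (univ_nonempty_iff.2 ⟨⟨0, hM⟩⟩ |>.image c)
  set D := univ.filter fun b => 1 < #(univ.filter fun m => 0 < K (c m) b)
  have hout : ∀ b, outputProb K P b = (∑ m, K (c m) b) / M := fun b =>
    sum_uniformOn_image_mul hc (K · b)
  have hD : ∑ b ∈ D, outputProb K P b = (∑ m, erasure K c m) / M := by
    simp only [hout, ← sum_div, erasure]
    rw [sum_comm]
  have hgood : ∀ b ∉ D,
      outputProb K P b * log M = outputProb K P b * log (1 / compatibleProb K P b) := by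
    intro b hb
    rcases eq_or_ne (outputProb K P b) 0 with h | h
    · simp [h]
    have hpos := compatibleProb_pos hK0 hP.1 h
    rw [compatibleProb_uniformOn_image hc] at hpos ⊢
    have hcount : #(univ.filter fun m => 0 < K (c m) b) = 1 := by
      simp only [D, mem_filter, mem_univ, true_and, not_lt] at hb
      have : #(univ.filter fun m => 0 < K (c m) b) ≠ 0 := by rintro h; simp [h] at hpos
      omega
    simp [hcount]
  calc (1 - (∑ m, erasure K c m) / M) * log M = ∑ b ∈ Dᶜ, outputProb K P b * log M := by
        rw [← hD, ← sum_mul, ← hP.2, ← sum_outputProb hK1, ← sum_add_sum_compl D,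
          add_sub_cancel_left]
    _ = ∑ b ∈ Dᶜ, outputProb K P b * log (1 / compatibleProb K P b) :=
        sum_congr rfl fun b hb => hgood b (mem_compl.1 hb)
    _ ≤ forneyValue K P :=
        sum_le_sum_of_subset_of_nonneg (subset_univ _) fun b _ _ =>
          outputProb_mul_log_nonneg hK0 hP b

end Converse

section ProductSums

variable {ι : Type*} [Fintype ι] [DecidableEq ι] [Fintype B] {Q : B → ℝ}

lemma isPMF_pi (hQ : IsPMF Q) : IsPMF (fun y : ι → B => ∏ i, Q (y i)) :=
  ⟨fun y => prod_nonneg fun i _ => hQ.1 _, by simp [← Fintype.prod_sum, hQ.2]⟩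

lemma sum_pi_mul_prod (hQ : ∑ b, Q b = 1) (s : Finset ι) (g : ι → B → ℝ) :
    ∑ y : ι → B, (∏ i, Q (y i)) * ∏ i ∈ s, g i (y i) = ∏ i ∈ s, ∑ b, Q b * g i b := by
  have hprod : ∀ y : ι → B, (∏ i, Q (y i)) * ∏ i ∈ s, g i (y i) =
      ∏ i, Q (y i) * if i ∈ s then g i (y i) else 1 := fun y => by
    rw [prod_mul_distrib, prod_ite_mem, univ_inter]
  simp only [hprod]
  rw [← Fintype.prod_sum fun i b => Q b * if i ∈ s then g i b else 1]
  simp only [mul_ite, mul_one, sum_ite_irrel, hQ, prod_ite_mem, univ_inter]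

lemma sum_pi_mul_apply (hQ : ∑ b, Q b = 1) (i : ι) (f : B → ℝ) :
    ∑ y : ι → B, (∏ l, Q (y l)) * f (y i) = ∑ b, Q b * f b := by
  simpa using sum_pi_mul_prod hQ {i} fun _ => f

lemma sum_pi_mul_apply_mul_apply (hQ : ∑ b, Q b = 1) {i j : ι} (hij : i ≠ j) (f g : B → ℝ) :
    ∑ y : ι → B, (∏ l, Q (y l)) * (f (y i) * g (y j)) = (∑ b, Q b * f b) * ∑ b, Q b * g b := by
  simpa [prod_pair hij, hij.symm] using sum_pi_mul_prod hQ {i, j} fun l => if l = i then f else g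

end ProductSums

section Chebyshev

variable [Fintype B] {Q : B → ℝ}

lemma sum_filter_le_abs_le_sum_mul_sq_div (hQ : ∀ b, 0 ≤ Q b) (f : B → ℝ) {t : ℝ} (ht : 0 < t) :
    ∑ b ∈ univ.filter (fun b => t ≤ |f b|), Q b ≤ (∑ b, Q b * f b ^ 2) / t ^ 2 := by
  rw [le_div_iff₀ (by positivity), sum_mul]
  calc ∑ b ∈ univ.filter (fun b => t ≤ |f b|), Q b * t ^ 2
      ≤ ∑ b ∈ univ.filter (fun b => t ≤ |f b|), Q b * f b ^ 2 := by
        refine sum_le_sum fun b hb => mul_le_mul_of_nonneg_left ?_ (hQ b)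
        simpa [sq_abs] using pow_le_pow_left₀ ht.le (mem_filter.1 hb).2 2
    _ ≤ ∑ b, Q b * f b ^ 2 :=
        sum_le_sum_of_subset_of_nonneg (filter_subset _ _) fun b _ _ =>
          mul_nonneg (hQ b) (sq_nonneg _)

variable {ι : Type*} [Fintype ι] [DecidableEq ι]

lemma sum_pi_mul_sum_sq (hQ : ∑ b, Q b = 1) (g : B → ℝ) (hg : ∑ b, Q b * g b = 0) :
    ∑ y : ι → B, (∏ l, Q (y l)) * (∑ i, g (y i)) ^ 2 = Fintype.card ι * ∑ b, Q b * g b ^ 2 := by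
  have hterm : ∀ i j : ι, ∑ y : ι → B, (∏ l, Q (y l)) * (g (y i) * g (y j)) =
      if i = j then ∑ b, Q b * g b ^ 2 else 0 := by
    intro i j
    split_ifs with h
    · subst h
      simp_rw [← sq]
      exact sum_pi_mul_apply hQ i fun b => g b ^ 2
    · rw [sum_pi_mul_apply_mul_apply hQ h, hg, zero_mul]
  calc ∑ y : ι → B, (∏ l, Q (y l)) * (∑ i, g (y i)) ^ 2
      = ∑ i, ∑ j, ∑ y : ι → B, (∏ l, Q (y l)) * (g (y i) * g (y j)) := by
        simp only [sq, sum_mul_sum]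
        simp only [mul_sum]
        rw [sum_comm]
        exact sum_congr rfl fun i _ => sum_comm
    _ = Fintype.card ι * ∑ b, Q b * g b ^ 2 := by
        simp [hterm]

/-- Weak law of large numbers, in Chebyshev's form. -/
lemma sum_pi_filter_le_abs_sub_le (hQ : IsPMF Q) (f : B → ℝ) {t : ℝ} (ht : 0 < t) :
    ∑ y ∈ univ.filter (fun y : ι → B =>
        t ≤ |∑ i, f (y i) - Fintype.card ι * ∑ b, Q b * f b|), ∏ i, Q (y i) ≤
      Fintype.card ι * (∑ b, Q b * (f b - ∑ b', Q b' * f b') ^ 2) / t ^ 2 := by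
  set μ := ∑ b, Q b * f b
  have hmean : ∑ b, Q b * (f b - μ) = 0 := by
    rw [← sub_self μ]
    simp only [mul_sub, sum_sub_distrib, ← sum_mul, hQ.2, one_mul, μ]
  have hsum : ∀ y : ι → B, ∑ i, f (y i) - Fintype.card ι * μ = ∑ i, (f (y i) - μ) := by
    simp [sum_sub_distrib]
  simp only [hsum]
  rw [← sum_pi_mul_sum_sq hQ.2 _ hmean]
  exact sum_filter_le_abs_le_sum_mul_sq_div (isPMF_pi hQ).1 _ ht

end Chebyshev

section Typicality

variable [Fintype A] [Fintype B] {K : A → B → ℝ} {P : A → ℝ}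

/-- By Chebyshev's inequality: on the support of `(PK)^k`, `log (1 / P^k(X^k(y)))` is a sum of
`k` independent terms of mean `forneyValue K P`. -/
lemma tendsto_sum_outputProb_filter_exp_lt_compatibleProb (hK0 : ∀ a b, 0 ≤ K a b)
    (hK1 : ∀ a, ∑ b, K a b = 1) (hP : IsPMF P) {α : ℝ} (hα : 0 < α) :
    Tendsto (fun k : ℕ => ∑ y ∈ univ.filter (fun y : Fin k → B =>
        exp (-(k * (forneyValue K P - α))) < compatibleProb (Wn K k) (fun x => ∏ i, P (x i)) y),
      outputProb (Wn K k) (fun x => ∏ i, P (x i)) y) atTop (nhds 0) := by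
  set v := forneyValue K P
  set Z := fun b => log (1 / compatibleProb K P b)
  have hQ : IsPMF (outputProb K P) :=
    ⟨outputProb_nonneg hK0 hP.1, (sum_outputProb hK1 P).trans hP.2⟩
  have hdev : ∀ k : ℕ, ∀ y : Fin k → B, ∏ i, outputProb K P (y i) ≠ 0 →
      exp (-(k * (v - α))) < compatibleProb (Wn K k) (fun x => ∏ i, P (x i)) y →
      k * α ≤ |∑ i, Z (y i) - k * ∑ b, outputProb K P b * Z b| := by
    intro k y hy hlt
    rw [compatibleProb_Wn_eq_exp hK0 hP.1 hy, exp_lt_exp] at hlt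
    exact (by linarith : k * α ≤ -(∑ i, Z (y i) - k * v)).trans (neg_le_abs _)
  have hbound : ∀ k : ℕ, 1 ≤ k → ∑ y ∈ univ.filter (fun y : Fin k → B =>
        exp (-(k * (v - α))) < compatibleProb (Wn K k) (fun x => ∏ i, P (x i)) y),
      outputProb (Wn K k) (fun x => ∏ i, P (x i)) y ≤
        (∑ b, outputProb K P b * (Z b - v) ^ 2) / α ^ 2 / k := by
    intro k hk
    have hk' : (0 : ℝ) < k := by exact_mod_cast hk
    simp only [outputProb_Wn]
    rw [← sum_filter_ne_zero]
    refine (sum_le_sum_of_subset_of_nonneg ?_ fun y _ _ => (isPMF_pi hQ).1 y).trans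
      ((sum_pi_filter_le_abs_sub_le hQ Z (by positivity : 0 < k * α)).trans_eq ?_)
    · intro y hy
      simp only [mem_filter, mem_univ, true_and] at hy ⊢
      simpa using hdev k y hy.2 hy.1
    · simp only [Fintype.card_fin]
      field_simp
      rfl
  exact squeeze_zero' (Eventually.of_forall fun k => sum_nonneg fun y _ =>
    outputProb_nonneg (Wn_nonneg hK0 k) (isPMF_pi hP).1 y) (eventually_atTop.2 ⟨1, hbound⟩)
    (tendsto_const_div_atTop_nhds_zero_nat _)

end Typicality

section RandomCoding

lemma exists_le_of_sum_mul_le {ι : Type*} [Fintype ι] {w f : ι → ℝ} (hw : IsPMF w) {t : ℝ}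
    (h : ∑ i, w i * f i ≤ t) : ∃ i, f i ≤ t := by
  by_contra! H
  obtain ⟨i, -, hi⟩ := exists_ne_zero_of_sum_ne_zero (hw.2 ▸ one_ne_zero : ∑ i, w i ≠ 0)
  have hlt : ∑ i, w i * t < ∑ i, w i * f i :=
    sum_lt_sum (fun i _ => mul_le_mul_of_nonneg_left (H i).le (hw.1 i))
      ⟨i, mem_univ _, mul_lt_mul_of_pos_left (H i) ((hw.1 i).lt_of_ne' hi)⟩
  rw [← sum_mul, hw.2, one_mul] at hlt
  linarith

variable [Fintype B] {K : A → B → ℝ} {M : ℕ}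

lemma erasure_comp_le (hK0 : ∀ a b, 0 ≤ K a b) {M' : ℕ} (c : Fin M → A) (e : Fin M' ↪ Fin M)
    (m : Fin M') : erasure K (c ∘ e) m ≤ erasure K c (e m) := by
  refine sum_le_sum_of_subset_of_nonneg (fun b hb => ?_) fun b _ _ => hK0 _ _
  simp only [mem_filter, mem_univ, true_and, Function.comp] at hb ⊢
  exact hb.trans_le (card_le_card_of_injOn e (fun i hi => by simpa using hi) e.injective.injOn)

/-- Expurgation: discarding the codewords with erasure probability at least `δ`. -/
lemma exists_subcode_erasure_lt (hK0 : ∀ a b, 0 ≤ K a b) (c : Fin M → A) {δ : ℝ} (hδ : 0 < δ) :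
    ∃ (M' : ℕ) (c' : Fin M' → A), M - (∑ m, erasure K c m) / δ ≤ M' ∧ ∀ m, erasure K c' m < δ := by
  set G := univ.filter fun m => erasure K c m < δ
  refine ⟨#G, c ∘ G.orderEmbOfFin rfl, ?_, fun i => (erasure_comp_le hK0 c _ i).trans_lt ?_⟩
  · have hbad : #Gᶜ * δ ≤ ∑ m, erasure K c m := by
      calc #Gᶜ * δ = ∑ m ∈ Gᶜ, δ := by rw [sum_const, nsmul_eq_mul]
        _ ≤ ∑ m ∈ Gᶜ, erasure K c m := sum_le_sum fun m hm => by simpa [G] using hm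
        _ ≤ ∑ m, erasure K c m := sum_le_sum_of_subset_of_nonneg (subset_univ _)
            fun m _ _ => sum_nonneg fun b _ => hK0 _ _
    have hcard : (#G : ℝ) + #Gᶜ = M := by exact_mod_cast (card_add_card_compl G).trans (by simp)
    have := (le_div_iff₀ hδ).2 hbad
    linarith
  · exact (mem_filter.1 (orderEmbOfFin_mem G rfl i)).2

lemma erasure_le_sum_compl_add_sum (hK0 : ∀ a b, 0 ≤ K a b) (G : Finset B) (C : Fin M → A)
    (m : Fin M) : erasure K C m ≤ ∑ b ∈ Gᶜ, K (C m) b +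
      ∑ m' ∈ univ.erase m, ∑ b ∈ G, K (C m) b * if 0 < K (C m') b then 1 else 0 := by
  set N := fun b => ∑ m' ∈ univ.erase m, if 0 < K (C m') b then (1 : ℝ) else 0
  have hN0 : ∀ b, 0 ≤ N b := fun b => sum_nonneg fun _ _ => by positivity
  have hN1 : ∀ b, 1 < #(univ.filter fun m' => 0 < K (C m') b) → 1 ≤ N b := fun b hb => by
    obtain ⟨m', hm', hne⟩ := exists_mem_ne hb m
    calc (1 : ℝ) = if 0 < K (C m') b then 1 else 0 := by simp [(mem_filter.1 hm').2]
      _ ≤ N b := single_le_sum (f := fun m' => if 0 < K (C m') b then (1 : ℝ) else 0)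
          (fun _ _ => by positivity) (mem_erase.2 ⟨hne, mem_univ _⟩)
  have hswap : ∑ m' ∈ univ.erase m, ∑ b ∈ G, K (C m) b * (if 0 < K (C m') b then 1 else 0) =
      ∑ b ∈ G, K (C m) b * N b := by
    rw [sum_comm]
    simp only [N, mul_sum]
  rw [hswap, erasure, ← sum_filter_add_sum_filter_not _ (· ∈ G), add_comm]
  refine add_le_add (sum_le_sum_of_subset_of_nonneg (fun b hb => mem_compl.2 (mem_filter.1 hb).2)
    fun b _ _ => hK0 _ _) ?_
  calc ∑ b ∈ (univ.filter _).filter (· ∈ G), K (C m) b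
      ≤ ∑ b ∈ (univ.filter _).filter (· ∈ G), K (C m) b * N b :=
        sum_le_sum fun b hb => le_mul_of_one_le_right (hK0 _ _) <|
          hN1 b (mem_filter.1 (mem_filter.1 hb).1).2
    _ ≤ ∑ b ∈ G, K (C m) b * N b :=
        sum_le_sum_of_subset_of_nonneg (fun b hb => (mem_filter.1 hb).2)
          fun b _ _ => mul_nonneg (hK0 _ _) (hN0 b)

variable [Fintype A] {P : A → ℝ}

/-- Each of the other `M - 1` independent codewords is compatible with the output `b` with
probability `P(X(b))`. -/
lemma sum_pi_mul_erasure_le (hK0 : ∀ a b, 0 ≤ K a b) (hK1 : ∀ a, ∑ b, K a b = 1) (hP : IsPMF P)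
    {ε : ℝ} (hε : 0 ≤ ε) (m : Fin M) :
    ∑ C : Fin M → A, (∏ m', P (C m')) * erasure K C m ≤
      ∑ b ∈ univ.filter (fun b => ε < compatibleProb K P b), outputProb K P b + (M - 1) * ε := by
  set G := univ.filter fun b => compatibleProb K P b ≤ ε
  have hGc : Gᶜ = univ.filter fun b => ε < compatibleProb K P b := by ext b; simp [G]
  have hone : ∀ b, ∑ C : Fin M → A, (∏ m', P (C m')) * K (C m) b = outputProb K P b :=
    fun b => sum_pi_mul_apply hP.2 m (K · b)
  have htwo : ∀ m' ∈ univ.erase m, ∀ b, ∑ C : Fin M → A, (∏ m'', P (C m'')) *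
      (K (C m) b * if 0 < K (C m') b then 1 else 0) =
        outputProb K P b * compatibleProb K P b := fun m' hm' b => by
    rw [sum_pi_mul_apply_mul_apply hP.2 (mem_erase.1 hm').1.symm (K · b)
      fun a => if 0 < K a b then 1 else 0, compatibleProb_eq_sum_ite]
    simp [outputProb, mul_ite]
  calc ∑ C : Fin M → A, (∏ m', P (C m')) * erasure K C m
      ≤ ∑ C : Fin M → A, (∏ m', P (C m')) * (∑ b ∈ Gᶜ, K (C m) b +
          ∑ m' ∈ univ.erase m, ∑ b ∈ G, K (C m) b * if 0 < K (C m') b then 1 else 0) :=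
        sum_le_sum fun C _ => mul_le_mul_of_nonneg_left (erasure_le_sum_compl_add_sum hK0 G C m)
          ((isPMF_pi hP).1 C)
    _ = ∑ b ∈ Gᶜ, outputProb K P b +
          ∑ m' ∈ univ.erase m, ∑ b ∈ G, outputProb K P b * compatibleProb K P b := by
        simp only [mul_add, mul_sum, sum_add_distrib]
        congr 1
        · rw [sum_comm]
          exact sum_congr rfl fun b _ => hone b
        · rw [sum_comm]
          refine sum_congr rfl fun m' hm' => ?_
          rw [sum_comm]
          exact sum_congr rfl fun b _ => htwo m' hm' b
    _ ≤ ∑ b ∈ Gᶜ, outputProb K P b + ∑ m' ∈ univ.erase m, ε :=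
        add_le_add le_rfl <| sum_le_sum fun _ _ =>
          sum_filter_outputProb_mul_compatibleProb_le hK0 hK1 hP hε
    _ = _ := by
        rw [hGc, sum_const, card_erase_of_mem (mem_univ m), card_univ, Fintype.card_fin,
          nsmul_eq_mul, Nat.cast_pred m.pos]

end RandomCoding

section Achievability

variable [Fintype A] [Fintype B] {K : A → B → ℝ} {P : A → ℝ}

/-- Random coding with codewords drawn independently from `P`, followed by expurgation. -/
lemma exists_code_erasure_lt (hK0 : ∀ a b, 0 ≤ K a b) (hK1 : ∀ a, ∑ b, K a b = 1) (hP : IsPMF P)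
    {ε : ℝ} (hε : 0 ≤ ε) (M : ℕ) {δ : ℝ} (hδ : 0 < δ) :
    ∃ (M' : ℕ) (c : Fin M' → A), M * (1 - (∑ b ∈ univ.filter (fun b => ε < compatibleProb K P b),
      outputProb K P b + (M - 1) * ε) / δ) ≤ M' ∧ ∀ m, erasure K c m < δ := by
  set β := ∑ b ∈ univ.filter (fun b => ε < compatibleProb K P b), outputProb K P b + (M - 1) * ε
  have hE : ∑ C : Fin M → A, (∏ m, P (C m)) * ∑ m, erasure K C m ≤ M * β := by
    simp only [mul_sum]
    rw [sum_comm]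
    calc ∑ m, ∑ C : Fin M → A, (∏ m', P (C m')) * erasure K C m ≤ ∑ _m : Fin M, β :=
          sum_le_sum fun m _ => sum_pi_mul_erasure_le hK0 hK1 hP hε m
      _ = M * β := by simp
  obtain ⟨C, hC⟩ := exists_le_of_sum_mul_le (isPMF_pi hP) hE
  obtain ⟨M', c, hM', hc⟩ := exists_subcode_erasure_lt hK0 C hδ
  refine ⟨M', c, le_trans ?_ hM', hc⟩
  rw [mul_one_sub, mul_div_assoc']
  gcongr

lemma exists_code_of_lt_forneyValue (hK0 : ∀ a b, 0 ≤ K a b) (hK1 : ∀ a, ∑ b, K a b = 1)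
    (hP : IsPMF P) {ρ : ℝ} (hρ0 : 0 ≤ ρ) (hρ : ρ < forneyValue K P) {δ : ℝ} (hδ : 0 < δ) :
    ∃ (k M : ℕ) (c : Fin M → Fin k → A), 1 ≤ k ∧ exp (k * ρ) ≤ M ∧
      ∀ m, erasure (Wn K k) c m < δ := by
  set α := (forneyValue K P - ρ) / 2
  have hα : 0 < α := by simp only [α]; linarith
  have hexp : Tendsto (fun k : ℕ => 3 * exp (-(k * α))) atTop (nhds 0) := by
    simpa using (tendsto_exp_neg_atTop_nhds_zero.comp
      (tendsto_natCast_atTop_atTop.atTop_mul_const hα)).const_mul 3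
  obtain ⟨k, hk1, htyp, hexpk⟩ := ((eventually_ge_atTop 1).and
    (((tendsto_sum_outputProb_filter_exp_lt_compatibleProb hK0 hK1 hP hα).eventually
      (gt_mem_nhds (by positivity : 0 < δ / 4))).and
    (hexp.eventually (gt_mem_nhds (by positivity : 0 < δ / 4))))).exists
  set x := exp (k * ρ)
  set ε := exp (-(k * (forneyValue K P - α)))
  obtain ⟨M', c, hM', hc⟩ := exists_code_erasure_lt (Wn_nonneg hK0 k) (sum_Wn hK1 k)
    (isPMF_pi hP) (exp_pos _).le (ε := ε) (2 * ⌈x⌉₊) hδ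
  refine ⟨k, M', c, hk1, le_trans ?_ hM', hc⟩
  have hx1 : 1 ≤ x := one_le_exp (by positivity)
  have hceil : (⌈x⌉₊ : ℝ) < x + 1 := Nat.ceil_lt_add_one (exp_pos _).le
  have hxε : x * ε = exp (-(k * α)) := by
    rw [← exp_add]
    congr 1
    simp only [α]
    ring
  have hmid : (2 * ⌈x⌉₊ - 1 : ℝ) * ε ≤ 3 * exp (-(k * α)) := by
    rw [← hxε, ← mul_assoc]
    exact mul_le_mul_of_nonneg_right (by linarith) (exp_pos _).le
  set β := ∑ y ∈ univ.filter (fun y => ε < compatibleProb (Wn K k) (fun x => ∏ i, P (x i)) y),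
    outputProb (Wn K k) (fun x => ∏ i, P (x i)) y + (2 * ⌈x⌉₊ - 1) * ε
  have hβ : β / δ < 1 / 2 := by
    rw [div_lt_iff₀ hδ]
    linarith
  push_cast
  calc x ≤ ⌈x⌉₊ := Nat.le_ceil x
    _ = 2 * ⌈x⌉₊ * (1 - 1 / 2) := by ring
    _ ≤ 2 * ⌈x⌉₊ * (1 - β / δ) := by gcongr

end Achievability

lemma tendsto_div_sSup_of_superadditive {u : ℕ → ℝ} (hu : ∀ m n, u m + u n ≤ u (m + n))
    (hbdd : BddAbove (Set.range fun n => u n / n)) :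
    Tendsto (fun n => u n / n) atTop (nhds (sSup {v | ∃ n : ℕ, 1 ≤ n ∧ v = u n / n})) := by
  have hsub : Subadditive (-u) := fun m n => by simp only [Pi.neg_apply]; linarith [hu m n]
  have hbdd' : BddBelow (Set.range fun n => (-u) n / n) := by
    obtain ⟨c, hc⟩ := hbdd
    refine ⟨-c, ?_⟩
    rintro _ ⟨n, rfl⟩
    simpa [neg_div] using hc ⟨n, rfl⟩
  have hlim : hsub.lim = -sSup {v | ∃ n : ℕ, 1 ≤ n ∧ v = u n / n} := by
    rw [Subadditive.lim, Real.sInf_def]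
    congr 2
    ext v
    simp [neg_div, neg_eq_iff_eq_neg, eq_comm]
  simpa [neg_div, hlim] using (hsub.tendsto_lim hbdd').neg

section Capacity

variable {X Y : Type*} [Fintype X] [Fintype Y] {W : X → Y → ℝ}

def IsAchievableRate (W : X → Y → ℝ) (R : ℝ) : Prop :=
  0 ≤ R ∧ ∀ δ : ℝ, 0 < δ → ∃ (n M : ℕ) (c : Fin M → Fin n → X), 1 ≤ n ∧
    Real.exp (n * R) ≤ (M : ℝ) ∧ ∀ m, erasureProb W c m < δ

lemma forneyN_div_le (hW0 : ∀ x y, 0 ≤ W x y) (hW1 : ∀ x, ∑ y, W x y = 1) (n : ℕ) :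
    forneyN W n / n ≤ log (Fintype.card X) :=
  div_le_of_le_mul₀ n.cast_nonneg (log_natCast_nonneg _) <| by
    rw [mul_comm]
    exact forneyN_le hW0 hW1 n

lemma one_sub_mul_log_le_forneyN (hW0 : ∀ x y, 0 ≤ W x y) (hW1 : ∀ x, ∑ y, W x y = 1)
    {n M : ℕ} (hM : 0 < M) (c : Fin M → Fin n → X) {δ : ℝ} (hδ : δ < 1)
    (hc : ∀ m, erasureProb W c m < δ) : (1 - δ) * log M ≤ forneyN W n := by
  simp only [erasureProb_eq_erasure] at hc
  have hmean : (∑ m, erasure (Wn W n) c m) / M ≤ δ := by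
    rw [div_le_iff₀ (by exact_mod_cast hM)]
    exact (sum_le_sum fun m _ => (hc m).le).trans_eq (by simp [mul_comm])
  calc (1 - δ) * log M ≤ (1 - (∑ m, erasure (Wn W n) c m) / M) * log M := by
        gcongr
    _ ≤ forneyValue (Wn W n) (uniformOn (univ.image c)) :=
        one_sub_mean_erasure_mul_log_le (Wn_nonneg hW0 n) (sum_Wn hW1 n) hM <|
          injective_of_erasure_lt_one (Wn_nonneg hW0 n) (sum_Wn hW1 n) fun m => (hc m).trans hδ
    _ ≤ forneyN W n := forneyN_eq_forneyMax W n ▸ forneyValue_le_forneyMax _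
        ((univ_nonempty_iff.2 ⟨⟨0, hM⟩⟩).image c)

lemma IsAchievableRate.le_sSup (hW0 : ∀ x y, 0 ≤ W x y) (hW1 : ∀ x, ∑ y, W x y = 1) {R : ℝ}
    (hR : IsAchievableRate W R) : R ≤ sSup {v | ∃ n : ℕ, 1 ≤ n ∧ v = forneyN W n / n} := by
  set L := {v | ∃ n : ℕ, 1 ≤ n ∧ v = forneyN W n / n}
  have hL : BddAbove L := ⟨_, by rintro _ ⟨n, -, rfl⟩; exact forneyN_div_le hW0 hW1 n⟩
  have key : ∀ δ ∈ Set.Ioo (0 : ℝ) 1, (1 - δ) * R ≤ sSup L := by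
    rintro δ ⟨hδ0, hδ1⟩
    obtain ⟨n, M, c, hn, hM, hc⟩ := hR.2 δ hδ0
    have hMpos : 0 < M := by exact_mod_cast (exp_pos _).trans_le hM
    have hlog : n * R ≤ log M := (le_log_iff_exp_le (by exact_mod_cast hMpos)).2 hM
    have hcode := one_sub_mul_log_le_forneyN hW0 hW1 hMpos c hδ1 hc
    refine le_csSup_of_le hL ⟨n, hn, rfl⟩ ?_
    rw [le_div_iff₀ (by exact_mod_cast hn)]
    nlinarith
  have hlim : Tendsto (fun δ => (1 - δ) * R) (nhdsWithin 0 (Set.Ioi 0)) (nhds R) := by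
    have hcont : Continuous fun δ : ℝ => (1 - δ) * R := by fun_prop
    simpa using (hcont.tendsto 0).mono_left nhdsWithin_le_nhds
  exact le_of_tendsto hlim (eventually_of_mem (Ioo_mem_nhdsGT one_pos) key)

lemma isAchievableRate_of_lt_forneyN_div (hW0 : ∀ x y, 0 ≤ W x y) (hW1 : ∀ x, ∑ y, W x y = 1)
    {n : ℕ} (hn : 1 ≤ n) {ρ : ℝ} (hρ0 : 0 ≤ ρ) (hρ : ρ < forneyN W n / n) :
    IsAchievableRate W ρ := by
  refine ⟨hρ0, fun δ hδ => ?_⟩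
  rw [forneyN_eq_forneyMax, lt_div_iff₀ (by exact_mod_cast hn)] at hρ
  obtain ⟨S, hS, hlt⟩ := exists_lt_forneyValue_of_lt_forneyMax (by positivity) hρ
  obtain ⟨k, M, c, hk, hM, hc⟩ := exists_code_of_lt_forneyValue (Wn_nonneg hW0 n) (sum_Wn hW1 n)
    (isPMF_uniformOn hS) (by positivity) hlt hδ
  refine ⟨k * n, M, blockEquiv X k n ∘ c, Nat.mul_le_mul hk hn, ?_, fun m => ?_⟩
  · convert hM using 2
    push_cast
    ring
  · rw [erasureProb_eq_erasure, erasure_comp_equiv _ (blockEquiv Y k n) (Wn_blockEquiv k n)]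
    exact hc m

lemma Ceo_eq_sSup_forneyN_div (hW0 : ∀ x y, 0 ≤ W x y) (hW1 : ∀ x, ∑ y, W x y = 1) :
    Ceo W = sSup {v | ∃ n : ℕ, 1 ≤ n ∧ v = forneyN W n / n} := by
  set L := {v | ∃ n : ℕ, 1 ≤ n ∧ v = forneyN W n / n}
  have hL0 : 0 ≤ sSup L := Real.sSup_nonneg <| by
    rintro _ ⟨n, -, rfl⟩
    exact div_nonneg (forneyN_nonneg hW0 n) n.cast_nonneg
  have hCeo : ∀ R ∈ insert 0 {R | IsAchievableRate W R}, R ≤ sSup L := by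
    rintro R (rfl | hR)
    exacts [hL0, hR.le_sSup hW0 hW1]
  refine le_antisymm (csSup_le (Set.insert_nonempty _ _) hCeo)
    (csSup_le ⟨_, 1, le_rfl, rfl⟩ ?_)
  rintro _ ⟨n, hn, rfl⟩
  refine le_of_forall_lt_imp_le_of_dense fun ρ hρ => ?_
  rcases lt_or_ge ρ 0 with hρ0 | hρ0
  · exact hρ0.le.trans (le_csSup ⟨_, hCeo⟩ (Set.mem_insert _ _))
  · exact le_csSup ⟨_, hCeo⟩ (Set.mem_insert_of_mem _
      (isAchievableRate_of_lt_forneyN_div hW0 hW1 hn hρ0 hρ))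

end Capacity

end

theorem zue_capacity_multiletter_general {X Y : Type*} [Fintype X] [Fintype Y]
    [Nonempty X] (W : X → Y → ℝ)
    (hW0 : ∀ x y, 0 ≤ W x y) (hW1 : ∀ x, ∑ y, W x y = 1) :
    Tendsto (fun n : ℕ => forneyN W n / n) atTop (nhds (Ceo W)) ∧
    Ceo W = sSup {v : ℝ | ∃ n : ℕ, 1 ≤ n ∧ v = forneyN W n / n} := by
  have hCeo := Ceo_eq_sSup_forneyN_div hW0 hW1
  refine ⟨hCeo ▸ tendsto_div_sSup_of_superadditive (forneyN_add_le hW0 hW1) ?_, hCeo⟩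
  exact ⟨_, by rintro _ ⟨n, rfl⟩; exact forneyN_div_le hW0 hW1 n⟩

/-- Multi-letter formula for the zero-undetected-error capacity: `C_eo` is the
limit (and also the supremum) over `n` of `(1/n)` times the maximum over PMFs on
`X^n` that are uniform over their support of `∑_y (PWⁿ)(y) log (1/P(Xⁿ(y)))`. -/
theorem zue_capacity_multiletter {X Y : Type*} [Fintype X] [Fintype Y]
    [Nonempty X] [Nonempty Y] (W : X → Y → ℝ)
    (hW0 : ∀ x y, 0 ≤ W x y) (hW1 : ∀ x, ∑ y, W x y = 1) :
    Tendsto (fun n : ℕ => forneyN W n / n) atTop (nhds (Ceo W)) ∧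
    Ceo W = sSup {v : ℝ | ∃ n : ℕ, 1 ≤ n ∧ v = forneyN W n / n} :=
  zue_capacity_multiletter_general W hW0 hW1
end

section
/- For every directed graph G and every n ≥ 1, ρ(G^n) ≤ e^{n·Σ(G)}, i.e., the maximum cardinality of a subset of vertices of the n-fold strong power G^n inducing an acyclic subgraph is at most e raised to n times the Sperner capacity of G. -/
/-!
An acyclic set `A` of vertices of `Gⁿ` carries a rank function that strictly decreases along
its edges. The sum of the ranks of the entries of a tuple then strictly decreases along the
edges of `(Gⁿ)ᵐ`, so each of its level sets in `Aᵐ` is independent in `(Gⁿ)ᵐ`, and hence in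
`G^{mn}`. With `M` the largest rank this gives `|A|ᵐ ≤ (mM + 1) α(G^{mn}) ≤ (mM + 1) e^{mnΣ(G)}`
for every `m`, and since `mM + 1` grows only linearly in `m`, `|A| ≤ e^{nΣ(G)}`.
-/

open Real Filter

/-- Adjacency relation of the `n`-fold strong power of the directed graph with
adjacency relation `E`: there is an edge from `x` to `y` iff `x ≠ y` and in each
coordinate `j` either `x j = y j` or there is an edge from `x j` to `y j`. -/
def strongPow {V : Type*} (E : V → V → Prop) (n : ℕ) (x y : Fin n → V) : Prop :=
  x ≠ y ∧ ∀ j, x j = y j ∨ E (x j) (y j)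

/-- `l` is a directed cycle of the graph `E` all of whose vertices lie in `A`:
a list of at least two distinct vertices with an edge between consecutive
vertices and an edge from the last vertex back to the first. -/
def IsCycleIn {V : Type*} (E : V → V → Prop) (A : Set V) (l : List V) : Prop :=
  2 ≤ l.length ∧ l.Nodup ∧ (∀ x ∈ l, x ∈ A) ∧ l.Chain' E ∧
    ∀ x ∈ l.head?, ∀ y ∈ l.getLast?, E y x

/-- The subgraph of `E` induced by `A` is acyclic. -/
def AcyclicOn {V : Type*} (E : V → V → Prop) (A : Set V) : Prop :=
  ¬ ∃ l : List V, IsCycleIn E A l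

/-- `α(G)`: the maximum cardinality of an independent set in the graph `E`. -/
noncomputable def alphaOf {V : Type*} [Fintype V] (E : V → V → Prop) : ℕ :=
  sSup {k : ℕ | ∃ A : Finset V, (∀ x ∈ A, ∀ y ∈ A, ¬ E x y) ∧ A.card = k}

/-- `ρ(G)`: the maximum cardinality of a subset of vertices inducing an acyclic
subgraph of `E`. -/
noncomputable def rhoOf {V : Type*} [Fintype V] (E : V → V → Prop) : ℕ :=
  sSup {k : ℕ | ∃ A : Finset V, AcyclicOn E ↑A ∧ A.card = k}

/-- The Sperner capacity `Σ(G) = lim_n (1/n) log α(Gⁿ) = sup_n (1/n) log α(Gⁿ)`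
of the graph `E` (natural logarithms). -/
noncomputable def spernerCap {V : Type*} [Fintype V] (E : V → V → Prop) : ℝ :=
  sSup {x : ℝ | ∃ n : ℕ, 1 ≤ n ∧ x = Real.log (alphaOf (strongPow E n)) / n}

section Acyclic

variable {V : Type*} {E : V → V → Prop} {A : Set V}

theorem not_acyclicOn_of_forall_rel_succ [Finite V] (hirr : ∀ x, ¬ E x x) {g : ℕ → V}
    (hA : ∀ k, g k ∈ A) (hE : ∀ k, E (g k) (g (k + 1))) : ¬ AcyclicOn E A := by
  classical
  have hrep : ∃ j, ∃ i < j, g i = g j := by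
    obtain ⟨a, b, hab, h⟩ := Finite.exists_ne_map_eq_of_infinite g
    rcases hab.lt_or_gt with hlt | hgt
    exacts [⟨b, a, hlt, h⟩, ⟨a, b, hgt, h.symm⟩]
  obtain ⟨i, hij, hgij⟩ := Nat.find_spec hrep
  set j := Nat.find hrep
  -- `j` is the first index at which `g` revisits a vertex, so `g i, …, g (j - 1)` is a cycle.
  have hinj : Set.InjOn g (Set.Iio j) := fun a ha b hb hab => by
    by_contra hne
    rcases lt_or_gt_of_ne hne with hlt | hgt
    · exact Nat.find_min hrep hb ⟨a, hlt, hab⟩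
    · exact Nat.find_min hrep ha ⟨b, hgt, hab.symm⟩
  have hlen : 2 ≤ j - i := by
    by_contra hlt
    have hji : j = i + 1 := by omega
    exact hirr (g i) (by simpa only [hgij, hji] using hE i)
  refine fun hac => hac ⟨(List.range' i (j - i)).map g, by simpa using hlen, ?_, ?_, ?_, ?_⟩
  · refine List.Nodup.map_on (fun a ha b hb => hinj ?_ ?_) List.nodup_range'
    · simp only [List.mem_range'_1] at ha; exact Set.mem_Iio.2 (by omega)
    · simp only [List.mem_range'_1] at hb; exact Set.mem_Iio.2 (by omega)
  · simp only [List.mem_map]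
    rintro _ ⟨k, -, rfl⟩
    exact hA k
  · exact (List.isChain_map g).2 ((List.isChain_range' i (j - i) 1).imp fun | _, _, rfl => hE _)
  · intro x hx y hy
    have hj : j - i ≠ 0 := by omega
    simp only [List.head?_map, List.getLast?_map, List.head?_range', List.getLast?_range', hj,
      if_false, Option.map_some, Option.mem_some_iff] at hx hy
    obtain ⟨rfl, rfl⟩ := And.intro hx hy
    have hlast : i + (j - i) - 1 + 1 = j := by omega
    simpa only [hlast, ← hgij] using hE (i + (j - i) - 1)

theorem acyclicOn_empty : AcyclicOn E ∅ := by
  rintro ⟨_ | ⟨x, _⟩, hlen, -, hmem, -⟩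
  · simp at hlen
  · exact hmem x List.mem_cons_self

theorem exists_acyclicOn_card_eq_rhoOf [Fintype V] (E : V → V → Prop) :
    ∃ A : Finset V, AcyclicOn E ↑A ∧ A.card = rhoOf E :=
  Nat.sSup_mem (s := {k | ∃ A : Finset V, AcyclicOn E ↑A ∧ A.card = k})
    ⟨0, ∅, by simpa using acyclicOn_empty, rfl⟩
    ⟨Fintype.card V, by rintro _ ⟨A, -, rfl⟩; exact A.card_le_univ⟩

theorem AcyclicOn.wellFounded [Finite V] (hirr : ∀ x, ¬ E x x) (h : AcyclicOn E A) :
    WellFounded fun b a => a ∈ A ∧ b ∈ A ∧ E a b :=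
  wellFounded_iff_isEmpty_descending_chain.2
    ⟨fun ⟨_, hg⟩ =>
      not_acyclicOn_of_forall_rel_succ hirr (fun k => (hg k).1) (fun k => (hg k).2.2) h⟩

/-- The rank of `a` is the number of vertices of `A` reachable from `a` inside `A`. -/
theorem AcyclicOn.exists_rank_decreasing [Finite V] (hirr : ∀ x, ¬ E x x) (h : AcyclicOn E A) :
    ∃ f : V → ℕ, ∀ a ∈ A, ∀ b ∈ A, E a b → f b < f a := by
  have hwf := (h.wellFounded hirr).transGen
  refine ⟨fun a => {c | Relation.TransGen (fun b a => a ∈ A ∧ b ∈ A ∧ E a b) c a}.ncard,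
    fun a ha b hb hab => Set.ncard_lt_ncard ⟨fun c hc => hc.tail ⟨ha, hb, hab⟩, fun hsub => ?_⟩⟩
  exact hwf.irrefl.irrefl b (hsub (Relation.TransGen.single ⟨ha, hb, hab⟩))

end Acyclic

section Alpha

variable {W W' : Type*} [Fintype W] [Fintype W']

theorem card_le_alphaOf (E : W → W → Prop) {B : Finset W} (hB : ∀ x ∈ B, ∀ y ∈ B, ¬ E x y) :
    B.card ≤ alphaOf E :=
  le_csSup ⟨Fintype.card W, by rintro k ⟨C, -, rfl⟩; exact C.card_le_univ⟩ ⟨B, hB, rfl⟩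

theorem alphaOf_le_card (E : W → W → Prop) : alphaOf E ≤ Fintype.card W :=
  csSup_le ⟨0, ∅, by simp, rfl⟩ fun _ ⟨C, _, hC⟩ => hC ▸ C.card_le_univ

theorem alphaOf_le_of_injective {E : W → W → Prop} {E' : W' → W' → Prop} {φ : W → W'}
    (hφ : Function.Injective φ) (h : ∀ x y, E' (φ x) (φ y) → E x y) : alphaOf E ≤ alphaOf E' := by
  classical
  refine csSup_le ⟨0, ∅, by simp, rfl⟩ fun _ ⟨B, hB, hcard⟩ => ?_
  rw [← hcard, ← B.card_image_of_injective hφ]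
  refine card_le_alphaOf E' fun x hx y hy hxy => ?_
  obtain ⟨a, ha, rfl⟩ := Finset.mem_image.1 hx
  obtain ⟨b, hb, rfl⟩ := Finset.mem_image.1 hy
  exact hB a ha b hb (h a b hxy)

/-- Each level set of a rank function strictly decreasing along edges is independent. -/
theorem card_le_mul_alphaOf_of_rank (E : W → W → Prop) {S : Finset W} {w : W → ℕ} {K : ℕ}
    (hw : ∀ a ∈ S, ∀ b ∈ S, E a b → w b < w a) (hK : ∀ a ∈ S, w a ≤ K) :
    S.card ≤ (K + 1) * alphaOf E := by
  classical
  calc S.card ≤ alphaOf E * (Finset.range (K + 1)).card :=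
        Finset.card_le_mul_card_image_of_maps_to
          (fun a ha => Finset.mem_range_succ_iff.2 (hK a ha)) _ fun _ _ =>
            card_le_alphaOf E fun a ha b hb hab => by
              simp only [Finset.mem_filter] at ha hb
              exact (hw a ha.1 b hb.1 hab).ne (hb.2.trans ha.2.symm)
    _ = (K + 1) * alphaOf E := by rw [Finset.card_range, mul_comm]

end Alpha

theorem le_of_forall_pow_le_mul_pow {x y c : ℝ} (hy : 0 ≤ y)
    (h : ∀ m : ℕ, x ^ m ≤ (m * c + 1) * y ^ m) : x ≤ y := by
  by_contra! hyx
  have hxpos : 0 < x := hy.trans_lt hyx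
  set q := y / x
  -- `(m c + 1) q ^ m ≥ 1` for all `m`, but it tends to `0` since `0 ≤ q < 1`.
  have hge : ∀ m : ℕ, 1 ≤ c * (m * q ^ m) + q ^ m := fun m => by
    have hq : c * (m * q ^ m) + q ^ m = (m * c + 1) * y ^ m / x ^ m := by
      simp only [q, div_pow]; ring
    rw [hq, one_le_div (pow_pos hxpos m)]
    exact h m
  have htend : Tendsto (fun m : ℕ => c * (m * q ^ m) + q ^ m) atTop (nhds 0) := by
    have hq0 : 0 ≤ q := div_nonneg hy hxpos.le
    have hq1 : q < 1 := (div_lt_one hxpos).2 hyx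
    simpa using ((tendsto_self_mul_const_pow_of_lt_one hq0 hq1).const_mul c).add
      (tendsto_pow_atTop_nhds_zero_of_lt_one hq0 hq1)
  exact absurd (ge_of_tendsto' htend hge) (by norm_num)

section StrongPow

variable {V : Type*} {E : V → V → Prop}

theorem strongPow_irrefl (n : ℕ) (x : Fin n → V) : ¬ strongPow E n x x := fun h => h.1 rfl

theorem sum_rank_lt_of_strongPow {A : Set V} {f : V → ℕ}
    (hf : ∀ a ∈ A, ∀ b ∈ A, E a b → f b < f a) {m : ℕ} {s t : Fin m → V} (hs : ∀ j, s j ∈ A)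
    (ht : ∀ j, t j ∈ A) (hst : strongPow E m s t) : ∑ j, f (t j) < ∑ j, f (s j) := by
  have hle : ∀ j, f (t j) ≤ f (s j) := fun j => by
    rcases hst.2 j with heq | hE
    · rw [heq]
    · exact (hf _ (hs j) _ (ht j) hE).le
  obtain ⟨j, hj⟩ := Function.ne_iff.1 hst.1
  refine Finset.sum_lt_sum (fun j _ => hle j) ⟨j, Finset.mem_univ j, ?_⟩
  exact hf _ (hs j) _ (ht j) ((hst.2 j).resolve_left hj)

/-- `(Gⁿ)ᵐ` embeds into `G^{mn}` by flattening `Fin m × Fin n ≃ Fin (m * n)`. -/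
theorem alphaOf_strongPow_strongPow_le [Fintype V] (m n : ℕ) :
    alphaOf (strongPow (strongPow E n) m) ≤ alphaOf (strongPow E (m * n)) := by
  let φ : (Fin m → Fin n → V) ≃ (Fin (m * n) → V) :=
    (Equiv.curry (Fin m) (Fin n) V).symm.trans (finProdFinEquiv.arrowCongr (Equiv.refl V))
  have hφ : ∀ s i j, φ s (finProdFinEquiv (i, j)) = s i j := by simp [φ]
  refine alphaOf_le_of_injective φ.injective fun s t ⟨hne, hst⟩ =>
    ⟨fun h => hne (h ▸ rfl), fun i => ?_⟩
  refine or_iff_not_imp_left.2 fun hi => ⟨hi, fun j => ?_⟩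
  simpa only [hφ] using hst (finProdFinEquiv (i, j))

theorem log_alphaOf_strongPow_le_mul_log_card [Fintype V] (k : ℕ) :
    Real.log (alphaOf (strongPow E k)) ≤ k * Real.log (Fintype.card V) := by
  rcases (alphaOf (strongPow E k)).eq_zero_or_pos with h0 | hpos
  · rw [h0, Nat.cast_zero, Real.log_zero]
    exact mul_nonneg k.cast_nonneg (Real.log_natCast_nonneg _)
  · rw [← Real.log_pow]
    refine Real.log_le_log (by exact_mod_cast hpos) ?_
    exact_mod_cast (alphaOf_le_card _).trans_eq (by simp)

theorem log_alphaOf_strongPow_le_mul_spernerCap [Fintype V] (k : ℕ) :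
    Real.log (alphaOf (strongPow E k)) ≤ k * spernerCap E := by
  rcases Nat.eq_zero_or_pos k with rfl | hk
  · simpa using log_alphaOf_strongPow_le_mul_log_card (E := E) 0
  have hbdd : BddAbove
      {x : ℝ | ∃ n : ℕ, 1 ≤ n ∧ x = Real.log (alphaOf (strongPow E n)) / n} := by
    refine ⟨Real.log (Fintype.card V), ?_⟩
    rintro _ ⟨n, hn, rfl⟩
    rw [div_le_iff₀ (by exact_mod_cast hn)]
    linarith [log_alphaOf_strongPow_le_mul_log_card (E := E) n]
  have hk' : (0 : ℝ) < k := by exact_mod_cast hk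
  rw [mul_comm, ← div_le_iff₀ hk']
  exact le_csSup hbdd ⟨k, hk, rfl⟩

theorem alphaOf_strongPow_le_exp [Fintype V] (k : ℕ) :
    (alphaOf (strongPow E k) : ℝ) ≤ Real.exp (k * spernerCap E) :=
  (Real.le_exp_log _).trans (Real.exp_le_exp.2 (log_alphaOf_strongPow_le_mul_spernerCap k))

end StrongPow

theorem card_le_exp_spernerCap_of_acyclicOn {V : Type*} [Fintype V] {E : V → V → Prop} {n : ℕ}
    {A : Finset (Fin n → V)} (hA : AcyclicOn (strongPow E n) ↑A) :
    (A.card : ℝ) ≤ Real.exp (n * spernerCap E) := by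
  classical
  obtain ⟨f, hf⟩ := hA.exists_rank_decreasing (strongPow_irrefl n)
  set M := A.sup f
  refine le_of_forall_pow_le_mul_pow (c := M) (Real.exp_pos _).le fun m => ?_
  -- The rank of a tuple in `Aᵐ` is the sum of the ranks of its entries.
  have hcount : A.card ^ m ≤ (m * M + 1) * alphaOf (strongPow (strongPow E n) m) := by
    have hmem : ∀ s ∈ Fintype.piFinset fun _ : Fin m => A, ∀ j, s j ∈ (A : Set (Fin n → V)) :=
      fun s hs j => Fintype.mem_piFinset.1 hs j
    simpa using card_le_mul_alphaOf_of_rank (strongPow (strongPow E n) m)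
      (S := Fintype.piFinset fun _ : Fin m => A) (w := fun s => ∑ j, f (s j)) (K := m * M)
      (fun s hs t ht hst => sum_rank_lt_of_strongPow hf (hmem s hs) (hmem t ht) hst)
      (fun s hs =>
        (Finset.sum_le_sum fun j _ => Finset.le_sup (hmem s hs j)).trans_eq (by simp [M]))
  calc (A.card : ℝ) ^ m ≤ (m * M + 1) * alphaOf (strongPow (strongPow E n) m) := by
        exact_mod_cast hcount
    _ ≤ (m * M + 1) * alphaOf (strongPow E (m * n)) := by
        gcongr
        exact_mod_cast alphaOf_strongPow_strongPow_le m n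
    _ ≤ (m * M + 1) * Real.exp ((m * n : ℕ) * spernerCap E) := by
        gcongr
        exact alphaOf_strongPow_le_exp _
    _ = (m * M + 1) * Real.exp (n * spernerCap E) ^ m := by
        rw [← Real.exp_nat_mul, Nat.cast_mul, mul_assoc]

theorem rho_strongPow_le_exp_spernerCap_general {V : Type*} [Fintype V] (E : V → V → Prop)
    (n : ℕ) :
    (rhoOf (strongPow E n) : ℝ) ≤ Real.exp (n * spernerCap E) := by
  obtain ⟨A, hA, hcard⟩ := exists_acyclicOn_card_eq_rhoOf (strongPow E n)
  rw [← hcard]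
  exact card_le_exp_spernerCap_of_acyclicOn hA

/-- For every directed graph `G` and every `n ≥ 1`, `ρ(Gⁿ) ≤ e^{n Σ(G)}`. -/
theorem rho_strongPow_le_exp_spernerCap {V : Type*} [Fintype V] (E : V → V → Prop)
    (hirr : ∀ x, ¬ E x x) (n : ℕ) (hn : 1 ≤ n) :
    (rhoOf (strongPow E n) : ℝ) ≤ Real.exp (n * spernerCap E) :=
  rho_strongPow_le_exp_spernerCap_general E n
end

section
/- For every directed graph G, Σ_{x ∈ V(G)} 1/(1 + indeg(x,G)) ≤ ρ(G), where indeg(x,G) = |{x' ∈ V(G) : (x',x) ∈ E(G)}| is the in-degree of x and ρ(G) is the maximum cardinality of a subset of V(G) inducing an acyclic subgraph. -/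
open Real Filter

/-!
Greedy Caro–Wei argument: pick a vertex `v` of minimum in-degree, put it into the acyclic set and
delete `v` together with its in-neighbours. Each deleted vertex has in-degree at least that of `v`,
so the deleted vertices contribute at most `1` to the sum, while `v` has no in-neighbour among the
vertices chosen later and therefore lies on no cycle of the final set.
-/

namespace IsCycleIn

variable {V : Type*} {E : V → V → Prop} {A : Set V} {l : List V}

theorem exists_ne_rel_of_mem (hl : IsCycleIn E A l) {v : V} (hv : v ∈ l) :
    ∃ u ∈ l, u ≠ v ∧ E u v := by
  obtain ⟨hlen, hnd, -, hchain, hclose⟩ := hl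
  obtain ⟨s, t, rfl⟩ := List.append_of_mem hv
  rcases List.eq_nil_or_concat s with rfl | ⟨s, u, rfl⟩
  · rcases List.eq_nil_or_concat t with rfl | ⟨t, w, rfl⟩
    · simp at hlen
    · refine ⟨w, by simp, ?_, hclose v (by simp) w ?_⟩
      · rintro rfl
        simp at hnd
      · simp only [List.nil_append, List.concat_eq_append]
        rw [← List.cons_append, List.getLast?_concat]
        rfl
  · have hinfix : [u, v] <:+: s.concat u ++ v :: t := by
      simpa using List.infix_append s [u, v] t
    refine ⟨u, by simp, ?_, List.isChain_pair.mp (hchain.infix hinfix)⟩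
    rintro rfl
    simpa using hnd.sublist hinfix.sublist

theorem of_forall_mem (hl : IsCycleIn E A l) {B : Set V} (hB : ∀ x ∈ l, x ∈ B) :
    IsCycleIn E B l :=
  ⟨hl.1, hl.2.1, hB, hl.2.2.2⟩

end IsCycleIn

namespace AcyclicOn

variable {V : Type*} {E : V → V → Prop}

theorem empty : AcyclicOn E ∅ := by
  rintro ⟨l, hlen, -, hmem, -⟩
  obtain ⟨x, hx⟩ := List.exists_mem_of_length_pos (by omega : 0 < l.length)
  exact hmem x hx

theorem insert {A : Set V} (hA : AcyclicOn E A) {v : V} (hv : ∀ u ∈ A, ¬ E u v) :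
    AcyclicOn E (insert v A) := by
  rintro ⟨l, hl⟩
  by_cases hvl : v ∈ l
  · obtain ⟨u, hul, huv, hE⟩ := hl.exists_ne_rel_of_mem hvl
    exact hv u ((hl.2.2.1 u hul).resolve_left huv) hE
  · refine hA ⟨l, hl.of_forall_mem fun x hx => (hl.2.2.1 x hx).resolve_left ?_⟩
    rintro rfl
    exact hvl hx

end AcyclicOn

open Finset

theorem Finset.sum_one_div_one_add_le_one {ι : Type*} {s : Finset ι} {d : ι → ℕ}
    (hd : ∀ x ∈ s, #s ≤ d x + 1) : ∑ x ∈ s, (1 : ℝ) / (1 + d x) ≤ 1 := by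
  rcases s.eq_empty_or_nonempty with rfl | hs
  · simp
  calc ∑ x ∈ s, (1 : ℝ) / (1 + d x)
      ≤ #s • ((1 : ℝ) / #s) := by
        refine sum_le_card_nsmul _ _ _ fun x hx => ?_
        gcongr
        exact_mod_cast (hd x hx).trans_eq (add_comm _ _)
    _ ≤ 1 := by
        rw [nsmul_eq_mul, mul_one_div]
        exact div_self_le_one _

theorem card_le_rhoOf {V : Type*} [Fintype V] {E : V → V → Prop} {A : Finset V}
    (hA : AcyclicOn E A) : #A ≤ rhoOf E :=
  le_csSup ⟨Fintype.card V, fun _ ⟨B, _, hB⟩ => hB ▸ B.card_le_univ⟩ ⟨A, hA, rfl⟩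

section Greedy

variable {V : Type*} [DecidableEq V] (E : V → V → Prop) [DecidableRel E]

theorem exists_acyclicOn_subset_sum_le_card (S : Finset V) :
    ∃ A ⊆ S, AcyclicOn E A ∧ ∑ x ∈ S, (1 : ℝ) / (1 + #{y ∈ S | E y x}) ≤ #A := by
  induction S using Finset.strongInduction with
  | _ S ih =>
  rcases S.eq_empty_or_nonempty with rfl | hS
  · exact ⟨∅, subset_refl _, by simpa using AcyclicOn.empty, by simp⟩
  obtain ⟨v, hvS, hvmin⟩ := S.exists_min_image (fun x => #{y ∈ S | E y x}) hS
  set N := insert v {y ∈ S | E y v}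
  have hNS : N ⊆ S := insert_subset hvS (filter_subset _ _)
  obtain ⟨A, hAS, hA, hsum⟩ := ih (S \ N) (sdiff_ssubset hNS (insert_nonempty _ _))
  have hvA : v ∉ A := fun h => (mem_sdiff.mp (hAS h)).2 (mem_insert_self _ _)
  have hv : ∀ u ∈ A, ¬ E u v := fun u hu huv => by
    obtain ⟨huS, huN⟩ := mem_sdiff.mp (hAS hu)
    exact huN (mem_insert_of_mem (mem_filter.mpr ⟨huS, huv⟩))
  refine ⟨insert v A, insert_subset hvS (hAS.trans sdiff_subset), ?_, ?_⟩
  · simpa using hA.insert hv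
  have hrest : ∑ x ∈ S \ N, (1 : ℝ) / (1 + #{y ∈ S | E y x}) ≤ #A :=
    (sum_le_sum fun x _ => by gcongr; exact sdiff_subset).trans hsum
  have hnbhd : ∑ x ∈ N, (1 : ℝ) / (1 + #{y ∈ S | E y x}) ≤ 1 :=
    sum_one_div_one_add_le_one fun x hx =>
      calc #N ≤ #{y ∈ S | E y v} + 1 := card_insert_le _ _
        _ ≤ #{y ∈ S | E y x} + 1 := Nat.add_le_add_right (hvmin x (hNS hx)) 1
  rw [← sum_sdiff hNS, card_insert_of_notMem hvA]
  push_cast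
  exact add_le_add hrest hnbhd

end Greedy

theorem sum_inv_one_add_indeg_le_rho_general {V : Type*} [Fintype V] (E : V → V → Prop) :
    ∑ x : V, (1 : ℝ) / (1 + (Nat.card {x' : V // E x' x} : ℝ)) ≤ (rhoOf E : ℝ) := by
  classical
  obtain ⟨A, -, hA, hsum⟩ := exists_acyclicOn_subset_sum_le_card E univ
  have hindeg (x : V) : Nat.card {x' : V // E x' x} = #{y | E y x} := by
    rw [Nat.card_eq_fintype_card, Fintype.card_subtype]
  simp only [hindeg]
  exact hsum.trans (by exact_mod_cast card_le_rhoOf hA)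

/-- Caro–Wei-type bound: `∑_{x ∈ V(G)} 1/(1 + indeg(x,G)) ≤ ρ(G)`, where
`indeg(x,G) = |{x' : (x',x) ∈ E(G)}|`. -/
theorem sum_inv_one_add_indeg_le_rho {V : Type*} [Fintype V] (E : V → V → Prop)
    (hirr : ∀ x, ¬ E x x) :
    ∑ x : V, (1 : ℝ) / (1 + (Nat.card {x' : V // E x' x} : ℝ)) ≤ (rhoOf E : ℝ) :=
  sum_inv_one_add_indeg_le_rho_general E
end

section
/- For every acyclic directed graph G with q = |V(G)| ≥ 1 vertices and every n ≥ 1, the maximum size of an independent set in the n-fold strong power satisfies α(G^n) ≥ q^n / (nq − n + 1). -/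
open Real Filter

/-!
Rank every vertex by the number of vertices from which it can be reached. In an acyclic graph
the rank is less than `q` and strictly increases along every edge between distinct vertices, so
the total rank `x ↦ ∑ j, rank (x j)` strictly increases along every edge of `Gⁿ`. Its
`n (q - 1) + 1` level sets are therefore independent in `Gⁿ`, and by pigeonhole one of them has
at least `qⁿ / (n (q - 1) + 1)` elements.
-/

open Finset

theorem Relation.ReflTransGen.exists_nodup_isChain {V : Type*} {r : V → V → Prop} {a b : V}
    (h : Relation.ReflTransGen r a b) :
    ∃ l, (a :: l).IsChain r ∧ (a :: l).Nodup ∧ (a :: l).getLast (List.cons_ne_nil _ _) = b := by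
  induction h using Relation.ReflTransGen.head_induction_on with
  | refl => exact ⟨[], .singleton _, List.nodup_singleton _, rfl⟩
  | @head a c hac _ ih =>
    obtain ⟨l, hchain, hnodup, hlast⟩ := ih
    by_cases ha : a ∈ c :: l
    · -- restart the chain at the later occurrence of `a`
      obtain ⟨u, v, huv⟩ := List.append_of_mem ha
      have hsuf : (a :: v) <:+ (c :: l) := ⟨u, huv.symm⟩
      refine ⟨v, hchain.suffix hsuf, hsuf.sublist.nodup hnodup, ?_⟩
      simp [← hlast, huv]
    · exact ⟨c :: l, hchain.cons_cons hac, List.nodup_cons.mpr ⟨ha, hnodup⟩, hlast⟩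

theorem AcyclicOn.not_transGen_self {V : Type*} {E : V → V → Prop}
    (h : AcyclicOn E Set.univ) (x : V) :
    ¬ Relation.TransGen (fun a b => a ≠ b ∧ E a b) x x := by
  intro hx
  obtain ⟨y, ⟨hxy, exy⟩, hyx⟩ := Relation.TransGen.head'_iff.mp hx
  obtain ⟨l, hchain, hnodup, hlast⟩ := hyx.exists_nodup_isChain
  refine h ⟨y :: l, ?_, hnodup, fun z _ => Set.mem_univ z, hchain.imp fun _ _ => And.right, ?_⟩
  · cases l with
    | nil => exact absurd hlast hxy.symm
    | cons => simp
  · simp_all [List.getLast?_eq_some_getLast]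

-- Self-loops are discarded: the acyclicity hypothesis only rules out cycles of length at least 2.
open Classical in
noncomputable def reachRank {V : Type*} [Fintype V] (E : V → V → Prop) (x : V) : ℕ :=
  #{y | Relation.TransGen (fun a b => a ≠ b ∧ E a b) y x}

section reachRank

variable {V : Type*} [Fintype V] {E : V → V → Prop}

theorem reachRank_lt_reachRank (h : AcyclicOn E Set.univ) {x y : V} (hxy : x ≠ y)
    (e : E x y) : reachRank E x < reachRank E y := by
  classical
  refine card_lt_card ((ssubset_iff_of_subset fun z hz => ?_).2 ⟨x, ?_, ?_⟩)
  · simp only [mem_filter, mem_univ, true_and] at hz ⊢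
    exact hz.tail ⟨hxy, e⟩
  · simpa using Relation.TransGen.single ⟨hxy, e⟩
  · simpa using h.not_transGen_self x

theorem reachRank_lt_card (h : AcyclicOn E Set.univ) (x : V) :
    reachRank E x < Fintype.card V := by
  classical
  exact card_lt_univ_of_notMem (by simpa using h.not_transGen_self x)

end reachRank

theorem le_alphaOf {V : Type*} [Fintype V] {E : V → V → Prop} {A : Finset V}
    (hA : ∀ x ∈ A, ∀ y ∈ A, ¬ E x y) : #A ≤ alphaOf E :=
  le_csSup ⟨Fintype.card V, by rintro k ⟨B, -, rfl⟩; exact B.card_le_univ⟩ ⟨A, hA, rfl⟩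

theorem sum_lt_sum_of_strongPow {V : Type*} {E : V → V → Prop} {r : V → ℕ}
    (hr : ∀ x y, x ≠ y → E x y → r x < r y) {n : ℕ} {x y : Fin n → V}
    (h : strongPow E n x y) : ∑ j, r (x j) < ∑ j, r (y j) := by
  obtain ⟨hne, hadj⟩ := h
  obtain ⟨j₀, hj₀⟩ := Function.ne_iff.mp hne
  refine sum_lt_sum (fun j _ => ?_) ⟨j₀, mem_univ j₀, ?_⟩
  · rcases eq_or_ne (x j) (y j) with hj | hj
    · exact (congrArg r hj).le
    · exact (hr _ _ hj ((hadj j).resolve_left hj)).le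
  · exact hr _ _ hj₀ ((hadj j₀).resolve_left hj₀)

theorem card_pow_le_alphaOf_strongPow_mul {V : Type*} [Fintype V] {E : V → V → Prop}
    (r : V → ℕ) (k : ℕ) (hrk : ∀ x, r x ≤ k) (hr : ∀ x y, x ≠ y → E x y → r x < r y)
    (n : ℕ) : Fintype.card V ^ n ≤ alphaOf (strongPow E n) * (n * k + 1) := by
  classical
  by_contra! hlt
  have hmaps : ∀ x ∈ (univ : Finset (Fin n → V)), ∑ j, r (x j) ∈ range (n * k + 1) := by
    intro x _
    have := sum_le_card_nsmul univ (fun j => r (x j)) k fun j _ => hrk (x j)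
    simp only [card_univ, Fintype.card_fin, smul_eq_mul] at this
    exact mem_range.mpr (Nat.lt_succ_of_le this)
  obtain ⟨s, -, hs⟩ := exists_lt_card_fiber_of_mul_lt_card_of_maps_to hmaps
    (by simpa [mul_comm] using hlt :
      #(range (n * k + 1)) * alphaOf (strongPow E n) < #(univ : Finset (Fin n → V)))
  refine hs.not_ge (le_alphaOf ?_)
  intro x hx y hy hxy
  simp only [mem_filter] at hx hy
  exact (sum_lt_sum_of_strongPow hr hxy).ne (hx.2.trans hy.2.symm)

theorem alpha_strongPow_ge_of_acyclic_general {V : Type*} [Fintype V] (E : V → V → Prop)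
    (hacyc : AcyclicOn E Set.univ)
    (hq : 1 ≤ Fintype.card V) (n : ℕ) :
    (Fintype.card V : ℝ) ^ n /
        ((n : ℝ) * (Fintype.card V : ℝ) - (n : ℝ) + 1)
      ≤ (alphaOf (strongPow E n) : ℝ) := by
  have hcount := card_pow_le_alphaOf_strongPow_mul (reachRank E) (Fintype.card V - 1)
    (fun x => Nat.le_sub_one_of_lt (reachRank_lt_card hacyc x))
    (fun _ _ hxy e => reachRank_lt_reachRank hacyc hxy e) n
  have hN : ((n * (Fintype.card V - 1) + 1 : ℕ) : ℝ) = n * Fintype.card V - n + 1 := by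
    push_cast [Nat.cast_sub hq]
    ring
  rw [← hN, div_le_iff₀ (by positivity)]
  exact_mod_cast hcount

/-- For every acyclic directed graph `G` with `q = |V(G)| ≥ 1` vertices and
every `n ≥ 1`, `α(Gⁿ) ≥ qⁿ / (nq − n + 1)`. -/
theorem alpha_strongPow_ge_of_acyclic {V : Type*} [Fintype V] (E : V → V → Prop)
    (hirr : ∀ x, ¬ E x x) (hacyc : AcyclicOn E Set.univ)
    (hq : 1 ≤ Fintype.card V) (n : ℕ) (hn : 1 ≤ n) :
    (Fintype.card V : ℝ) ^ n /
        ((n : ℝ) * (Fintype.card V : ℝ) - (n : ℝ) + 1)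
      ≤ (alphaOf (strongPow E n) : ℝ) :=
  alpha_strongPow_ge_of_acyclic_general E hacyc hq n
end
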